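/- Let r, s be real with 0 < s, 2s < r, and r + 5s/3 < 1, and suppose r ≤ (3 − 2s)/9. Let x₂ ∈ (2r + s/3, 1 − r − s/3) and x₁ ∈ (r, x₂ − r − s/3). Then the three points (x₁, x₂), (1 − x₂ − s/3, 1 − x₂ + x₁), (x₂ − x₁ − s/3, 1 − s/3 − x₁) all lie in the closed region D8 = {(y₁, y₂) : r ≤ y₁ ≤ y₂ ≤ 1 − 4s/3}, and F₈ maps each of them cyclically to the next: F₈(x₁, x₂) = (1 − x₂ − s/3, 1 − x₂ + x₁), F₈(1 − x₂ − s/3, 1 − x₂ + x₁) = (x₂ − x₁ − s/3, 1 − s/3 − x₁), and F₈(x₂ − x₁ − s/3, 1 − s/3 − x₁) = (x₁, x₂). Thus there is a two-parameter family of period-3 orbits lying entirely in region 8. -/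

import Mathlib

/-!
The linear part of `F8` has order three and `F8` has a fixed point, so `F8 ∘ F8 ∘ F8 = id`.
Moreover `F8` permutes cyclically the three constraints `r ≤ x₁`, `x₁ + r + s/3 ≤ x₂`,
`x₂ ≤ 1 - r - s/3` cutting out a triangle, which therefore is `F8`-invariant, and this triangle
lies in `D8` as soon as `0 ≤ s ≤ r`.
-/

/-- The affine branch of the return-time map on region 8. -/
noncomputable def F8 (s : ℝ) (p : ℝ × ℝ) : ℝ × ℝ :=
  (1 - p.2 - s/3, 1 - p.2 + p.1)

/-- The closed region D8. -/
def D8 (r s : ℝ) : Set (ℝ × ℝ) :=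
  {p | r ≤ p.1 ∧ p.1 ≤ p.2 ∧ p.2 ≤ 1 - 4*s/3}

open Set

def neutralTriangle (r s : ℝ) : Set (ℝ × ℝ) :=
  {p | r ≤ p.1 ∧ p.1 + r + s/3 ≤ p.2 ∧ p.2 ≤ 1 - r - s/3}

theorem F8_F8 (s a b : ℝ) : F8 s (F8 s (a, b)) = (b - a - s/3, 1 - s/3 - a) := by
  simp only [F8, Prod.mk.injEq]
  constructor <;> ring

theorem F8_F8_F8 (s : ℝ) (p : ℝ × ℝ) : F8 s (F8 s (F8 s p)) = p := by
  simp only [F8]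
  ext <;> ring

theorem mapsTo_F8_neutralTriangle (r s : ℝ) :
    MapsTo (F8 s) (neutralTriangle r s) (neutralTriangle r s) := by
  rintro ⟨a, b⟩ ⟨hra, hab, hb⟩
  simp only [neutralTriangle, F8, mem_ofPred_eq]
  exact ⟨by linarith, by linarith, by linarith⟩

theorem neutralTriangle_subset_D8 {r s : ℝ} (hs : 0 ≤ s) (hsr : s ≤ r) :
    neutralTriangle r s ⊆ D8 r s := by
  rintro ⟨a, b⟩ ⟨hra, hab, hb⟩
  exact ⟨hra, by linarith, by linarith⟩

theorem neutral_period3_family_in_region8_general (r s x₁ x₂ : ℝ)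
    (hs : 0 < s) (hrs : 2*s < r)
    (hx2hi : x₂ < 1 - r - s/3)
    (hx1lo : r < x₁) (hx1hi : x₁ < x₂ - r - s/3) :
    (x₁, x₂) ∈ D8 r s ∧
    (1 - x₂ - s/3, 1 - x₂ + x₁) ∈ D8 r s ∧
    (x₂ - x₁ - s/3, 1 - s/3 - x₁) ∈ D8 r s ∧
    F8 s (x₁, x₂) = (1 - x₂ - s/3, 1 - x₂ + x₁) ∧
    F8 s (1 - x₂ - s/3, 1 - x₂ + x₁) = (x₂ - x₁ - s/3, 1 - s/3 - x₁) ∧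
    F8 s (x₂ - x₁ - s/3, 1 - s/3 - x₁) = (x₁, x₂) := by
  have hp : (x₁, x₂) ∈ neutralTriangle r s := ⟨hx1lo.le, by linarith, hx2hi.le⟩
  have hF := mapsTo_F8_neutralTriangle r s
  have hD : neutralTriangle r s ⊆ D8 r s := neutralTriangle_subset_D8 hs.le (by linarith)
  rw [← F8_F8 s x₁ x₂]
  exact ⟨hD hp, hD (hF hp), hD (hF (hF hp)), rfl, rfl, F8_F8_F8 s _⟩

theorem neutral_period3_family_in_region8 (r s x₁ x₂ : ℝ)
    (hs : 0 < s) (hrs : 2*s < r) (h1 : r + 5*s/3 < 1) (hhi : r ≤ (3 - 2*s)/9)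
    (hx2lo : 2*r + s/3 < x₂) (hx2hi : x₂ < 1 - r - s/3)
    (hx1lo : r < x₁) (hx1hi : x₁ < x₂ - r - s/3) :
    (x₁, x₂) ∈ D8 r s ∧
    (1 - x₂ - s/3, 1 - x₂ + x₁) ∈ D8 r s ∧
    (x₂ - x₁ - s/3, 1 - s/3 - x₁) ∈ D8 r s ∧
    F8 s (x₁, x₂) = (1 - x₂ - s/3, 1 - x₂ + x₁) ∧
    F8 s (1 - x₂ - s/3, 1 - x₂ + x₁) = (x₂ - x₁ - s/3, 1 - s/3 - x₁) ∧
    F8 s (x₂ - x₁ - s/3, 1 - s/3 - x₁) = (x₁, x₂) :=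
  neutral_period3_family_in_region8_general r s x₁ x₂ hs hrs hx2hi hx1lo hx1hi
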